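/- Let y = (y₁, y₂) with y₂ > 0 and y* = (y₁, -y₂). For every x in the closed upper half-plane with x ≠ y and x ≠ y*, the function x ↦ ∫₀^∞ e^{-as} (x₂ + s + y₂)/|x + s e₂ - y*|² ds is harmonic in the open upper half-plane (away from y). -/

import Mathlib

/-!
Since `v / (u ^ 2 + v ^ 2) = Re (v + u i)⁻¹`, on the horizontal (resp. vertical) line through `x`
the integrand is `e^{-as} Re (ζ + s + t c)⁻¹` with `c = i` (resp. `c = 1`), whose second
`t`-derivative is `2 c² e^{-as} Re (ζ + s + t c)⁻³`. At `x` both lines give the same point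
`(x₂ + s + y₂) + (x₁ - y₁) i`, so the two second derivatives cancel because `i² = -1`.
Differentiating twice under the integral is legitimate because `Re (ζ + s + t c) ≥ Re (ζ + t c)`
stays bounded away from `0` near `x`, so `e^{-as}` dominates every derivative.
-/

open MeasureTheory

/-- The Laplacian of a function on `ℝ²` (represented as `ℝ × ℝ`), computed as the sum of
the two pure second partial derivatives. -/
noncomputable def lap (f : ℝ × ℝ → ℝ) (p : ℝ × ℝ) : ℝ :=
  deriv (deriv (fun s => f (s, p.2))) p.1 + deriv (deriv (fun s => f (p.1, s))) p.2

open Complex Metric Set Topology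

theorem zpow_le_zpow_left_of_nonpos {K : Type*} [Field K] [LinearOrder K] [IsStrictOrderedRing K]
    {a b : K} {m : ℤ} (hm : m ≤ 0) (ha : 0 < a) (hab : a ≤ b) : b ^ m ≤ a ^ m := by
  simpa only [zpow_neg, inv_inv] using
    inv_anti₀ (zpow_pos ha _) (zpow_le_zpow_left₀ (neg_nonneg.mpr hm) ha.le hab)

theorem norm_re_mul_zpow_le {b z : ℂ} {m : ℤ} {δ : ℝ} (hm : m ≤ 0) (hδ : 0 < δ) (hz : δ ≤ ‖z‖) :
    ‖(b * z ^ m).re‖ ≤ ‖b‖ * δ ^ m :=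
  calc ‖(b * z ^ m).re‖ ≤ ‖b * z ^ m‖ := abs_re_le_norm _
    _ = ‖b‖ * ‖z‖ ^ m := by rw [norm_mul, norm_zpow]
    _ ≤ ‖b‖ * δ ^ m := by gcongr; exact zpow_le_zpow_left_of_nonpos hm hδ hz

theorem hasDerivAt_re_mul_affine_zpow (b ζ c : ℂ) (m : ℤ) {t : ℝ} (h : ζ + t * c ≠ 0) :
    HasDerivAt (fun t : ℝ => (b * (ζ + t * c) ^ m).re)
      (b * m * c * (ζ + t * c) ^ (m - 1)).re t := by
  have hline : HasDerivAt (fun z : ℂ => ζ + z * c) c t := by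
    simpa using ((hasDerivAt_id (t : ℂ)).mul_const c).const_add ζ
  have := ((hasDerivAt_zpow m _ (Or.inl h)).comp (t : ℂ) hline).const_mul b
  exact (this.congr_deriv (by ring)).real_of_complex

section DerivIntegral

variable {α : Type*} [MeasurableSpace α] {μ : Measure α}

theorem hasDerivAt_deriv_integral_of_dominated_loc_of_deriv_le {E : Type*}
    [NormedAddCommGroup E] [NormedSpace ℝ E]
    {f f' f'' : ℝ → α → E} {bound' bound'' : α → ℝ} {t₀ ε : ℝ} (hε : 0 < ε)
    (hf_int : ∀ t ∈ ball t₀ ε, Integrable (f t) μ)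
    (hf'_meas : ∀ t ∈ ball t₀ ε, AEStronglyMeasurable (f' t) μ)
    (hf''_meas : AEStronglyMeasurable (f'' t₀) μ)
    (h_bound' : ∀ᵐ s ∂μ, ∀ t ∈ ball t₀ ε, ‖f' t s‖ ≤ bound' s)
    (h_bound'' : ∀ᵐ s ∂μ, ∀ t ∈ ball t₀ ε, ‖f'' t s‖ ≤ bound'' s)
    (bound'_integrable : Integrable bound' μ) (bound''_integrable : Integrable bound'' μ)
    (h_diff : ∀ᵐ s ∂μ, ∀ t ∈ ball t₀ ε, HasDerivAt (f · s) (f' t s) t)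
    (h_diff' : ∀ᵐ s ∂μ, ∀ t ∈ ball t₀ ε, HasDerivAt (f' · s) (f'' t s) t) :
    Integrable (f'' t₀) μ ∧
      HasDerivAt (deriv fun t => ∫ s, f t s ∂μ) (∫ s, f'' t₀ s ∂μ) t₀ := by
  have first_deriv : ∀ t ∈ ball t₀ ε, Integrable (f' t) μ ∧
      HasDerivAt (fun t => ∫ s, f t s ∂μ) (∫ s, f' t s ∂μ) t := by
    intro t ht
    obtain ⟨r, hr, hsub⟩ := isOpen_iff.mp isOpen_ball t ht
    refine hasDerivAt_integral_of_dominated_loc_of_deriv_le (ball_mem_nhds t hr) ?_ (hf_int t ht)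
      (hf'_meas t ht) (h_bound'.mono fun s hs τ hτ => hs τ (hsub hτ)) bound'_integrable
      (h_diff.mono fun s hs τ hτ => hs τ (hsub hτ))
    filter_upwards [isOpen_ball.mem_nhds ht] with τ hτ using (hf_int τ hτ).aestronglyMeasurable
  have hderiv_eq : (deriv fun t => ∫ s, f t s ∂μ) =ᶠ[𝓝 t₀] fun t => ∫ s, f' t s ∂μ := by
    filter_upwards [ball_mem_nhds t₀ hε] with t ht using (first_deriv t ht).2.deriv
  have second_deriv := hasDerivAt_integral_of_dominated_loc_of_deriv_le (ball_mem_nhds t₀ hε)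
    (Filter.mem_of_superset (ball_mem_nhds t₀ hε) hf'_meas)
    (first_deriv t₀ (mem_ball_self hε)).1 hf''_meas h_bound'' bound''_integrable h_diff'
  exact ⟨second_deriv.1, second_deriv.2.congr_of_eventuallyEq hderiv_eq⟩

theorem hasDerivAt_deriv_integral_re_mul_affine_zpow {w : α → ℝ} (hw : Integrable w μ)
    {ζ : α → ℂ} (hζ : Measurable ζ) (b c : ℂ) {m : ℤ} (hm : m ≤ 0) {t₀ ε δ : ℝ}
    (hε : 0 < ε) (hδ : 0 < δ) (h_away : ∀ᵐ s ∂μ, ∀ t ∈ ball t₀ ε, δ ≤ ‖ζ s + (t : ℂ) * c‖) :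
    Integrable (fun s =>
        w s * (b * m * c * (m - 1 : ℤ) * c * (ζ s + (t₀ : ℂ) * c) ^ (m - 1 - 1)).re) μ ∧
      HasDerivAt (deriv fun t : ℝ => ∫ s, w s * (b * (ζ s + (t : ℂ) * c) ^ m).re ∂μ)
        (∫ s, w s * (b * m * c * (m - 1 : ℤ) * c * (ζ s + (t₀ : ℂ) * c) ^ (m - 1 - 1)).re ∂μ)
        t₀ := by
  have hmeas : ∀ (b' : ℂ) (m' : ℤ) (t : ℝ),
      AEStronglyMeasurable (fun s => w s * (b' * (ζ s + (t : ℂ) * c) ^ m').re) μ :=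
    fun b' m' t => hw.aestronglyMeasurable.mul (by fun_prop : Measurable _).aestronglyMeasurable
  have hnorm : ∀ (b' : ℂ) (m' : ℤ), m' ≤ 0 → ∀ᵐ s ∂μ, ∀ t ∈ ball t₀ ε,
      ‖w s * (b' * (ζ s + (t : ℂ) * c) ^ m').re‖ ≤ |w s| * (‖b'‖ * δ ^ m') := by
    intro b' m' hm'
    filter_upwards [h_away] with s hs t ht
    rw [norm_mul, Real.norm_eq_abs]
    exact mul_le_mul_of_nonneg_left (norm_re_mul_zpow_le hm' hδ (hs t ht)) (abs_nonneg _)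
  have hderiv : ∀ (b' : ℂ) (m' : ℤ), ∀ᵐ s ∂μ, ∀ t ∈ ball t₀ ε,
      HasDerivAt (fun t : ℝ => w s * (b' * (ζ s + (t : ℂ) * c) ^ m').re)
        (w s * (b' * m' * c * (ζ s + (t : ℂ) * c) ^ (m' - 1)).re) t := by
    intro b' m'
    filter_upwards [h_away] with s hs t ht
    have hne : ζ s + (t : ℂ) * c ≠ 0 := norm_pos_iff.mp (hδ.trans_le (hs t ht))
    exact (hasDerivAt_re_mul_affine_zpow b' (ζ s) c m' hne).const_mul (w s)
  refine hasDerivAt_deriv_integral_of_dominated_loc_of_deriv_le hε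
    (fun t ht => ?_) (fun t _ => hmeas _ _ t) (hmeas _ _ t₀) (hnorm _ (m - 1) (by omega))
    (hnorm _ (m - 1 - 1) (by omega)) (hw.abs.mul_const _) (hw.abs.mul_const _)
    (hderiv _ _) (hderiv _ _)
  refine (hw.abs.mul_const (‖b‖ * δ ^ m)).mono' (hmeas _ _ t) ?_
  filter_upwards [hnorm b m hm] with s hs using hs t ht

end DerivIntegral

theorem hasDerivAt_deriv_integral_exp_mul_re_inv {a : ℝ} (ha : 0 < a) (ζ c : ℂ) {t₀ ε δ : ℝ}
    (hε : 0 < ε) (hδ : 0 < δ) (h_away : ∀ t ∈ ball t₀ ε, δ ≤ (ζ + t * c).re) :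
    IntegrableOn (fun s : ℝ => Real.exp (-a * s) * (2 * c ^ 2 * (ζ + s + t₀ * c) ^ (-3 : ℤ)).re)
        (Ioi 0) ∧
      HasDerivAt
        (deriv fun t : ℝ => ∫ s in Ioi 0, Real.exp (-a * s) * ((ζ + s + t * c) ^ (-1 : ℤ)).re)
        (∫ s in Ioi 0, Real.exp (-a * s) * (2 * c ^ 2 * (ζ + s + t₀ * c) ^ (-3 : ℤ)).re) t₀ := by
  have h_away' : ∀ s ∈ Ioi (0 : ℝ), ∀ t ∈ ball t₀ ε, δ ≤ ‖ζ + s + (t : ℂ) * c‖ := by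
    intro s hs t ht
    have hre : (ζ + s + t * c).re = (ζ + t * c).re + s := by
      simp only [add_re, ofReal_re, mul_re, ofReal_im, zero_mul, sub_zero]
      ring
    refine (re_le_norm _).trans' ?_
    linarith [h_away t ht, mem_Ioi.mp hs]
  have hcoef : ((-1 : ℤ) : ℂ) * c * ((-2 : ℤ) : ℂ) * c = 2 * c ^ 2 := by
    push_cast
    ring
  have := hasDerivAt_deriv_integral_re_mul_affine_zpow (exp_neg_integrableOn_Ioi 0 ha)
    (ζ := fun s : ℝ => ζ + s) (by fun_prop) 1 c (m := -1) (by norm_num) hε hδ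
    (ae_restrict_of_forall_mem measurableSet_Ioi h_away')
  simpa only [one_mul, Int.reduceSub, hcoef, IntegrableOn] using this

theorem div_sq_add_sq_eq_re_zpow_neg_one (u v : ℝ) :
    v / (u ^ 2 + v ^ 2) = ((v + u * I : ℂ) ^ (-1 : ℤ)).re := by
  rw [zpow_neg_one, inv_re, normSq_add_mul_I, add_comm (u ^ 2)]
  simp

/-- For `a > 0` and `y` in the upper half-plane (`y* = (y₁,-y₂)`), the function
`x ↦ ∫₀^∞ e^{-as}(x₂+s+y₂)/|x + s e₂ - y*|² ds` is harmonic in the open upper half-plane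
(away from `y`). -/
theorem halfplane_green_correction_harmonic (a : ℝ) (ha : 0 < a) (y : ℝ × ℝ) (hy : 0 < y.2)
    (F : ℝ × ℝ → ℝ)
    (hF : ∀ x : ℝ × ℝ,
      F x = ∫ s in Set.Ioi (0 : ℝ),
        Real.exp (-a * s) * (x.2 + s + y.2) / ((x.1 - y.1) ^ 2 + (x.2 + s + y.2) ^ 2)) :
    ∀ x : ℝ × ℝ, 0 < x.2 → x ≠ y → lap F x = 0 := by
  intro x hx _
  have hv : 0 < x.2 + y.2 := by linarith
  have hF₁ : (fun t => F (t, x.2)) = fun t : ℝ => ∫ s in Ioi 0,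
      Real.exp (-a * s) * (((x.2 + y.2 : ℝ) - y.1 * I + s + t * I) ^ (-1 : ℤ)).re := by
    funext t
    simp only [hF, mul_div_assoc, div_sq_add_sq_eq_re_zpow_neg_one]
    congr! 5
    push_cast; ring
  have hF₂ : (fun t => F (x.1, t)) = fun t : ℝ => ∫ s in Ioi 0,
      Real.exp (-a * s) * ((y.2 + (x.1 - y.1 : ℝ) * I + s + t * 1) ^ (-1 : ℤ)).re := by
    funext t
    simp only [hF, mul_div_assoc, div_sq_add_sq_eq_re_zpow_neg_one]
    congr! 5
    push_cast; ring
  obtain ⟨hint₁, hderiv₁⟩ := hasDerivAt_deriv_integral_exp_mul_re_inv ha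
    ((x.2 + y.2 : ℝ) - y.1 * I) I one_pos hv (t₀ := x.1) fun t _ => by simp
  obtain ⟨hint₂, hderiv₂⟩ := hasDerivAt_deriv_integral_exp_mul_re_inv ha
    (y.2 + (x.1 - y.1 : ℝ) * I) 1 (half_pos hv) (half_pos hv) (t₀ := x.2) fun t ht => by
      rw [mem_ball, Real.dist_eq, abs_lt] at ht
      simp only [ofReal_sub, mul_one, add_re, ofReal_re, mul_re, sub_re, I_re, mul_zero, sub_im,
        ofReal_im, sub_self, I_im, add_zero]
      linarith
  have hpoint : ∀ s : ℝ, ((x.2 + y.2 : ℝ) - y.1 * I + s + x.1 * I : ℂ) =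
      y.2 + (x.1 - y.1 : ℝ) * I + s + x.2 * 1 := by
    intro s; push_cast; ring
  rw [lap, hF₁, hF₂, hderiv₁.deriv, hderiv₂.deriv, ← integral_add hint₁ hint₂]
  refine integral_eq_zero_of_ae (ae_of_all _ fun s => ?_)
  beta_reduce
  rw [Pi.zero_apply, hpoint, ← mul_add, ← add_re, ← add_mul]
  norm_num
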